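/- Let α, β be non-proportional linear forms and φ = α²β² ∈ S⁴ (Petrov type (22)). Then conf(φ) = aut(φ), and this common space is a complex subspace of sl₂(ℂ) of dimension 1. -/

import Mathlib

open MvPolynomial

/-- The action of `A ∈ sl₂(ℂ)` on `ℂ[x,y]` by derivations:
`A·f = −(a x + c y) ∂f/∂x − (b x + d y) ∂f/∂y` for `A = [[a,b],[c,d]]`. -/
noncomputable def sAct (A : Matrix (Fin 2) (Fin 2) ℂ) (f : MvPolynomial (Fin 2) ℂ) :
    MvPolynomial (Fin 2) ℂ :=
  -((C (A 0 0) * X 0 + C (A 1 0) * X 1) * pderiv 0 f)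
    - ((C (A 0 1) * X 0 + C (A 1 1) * X 1) * pderiv 1 f)

/-- A linear form: a nonzero homogeneous degree-1 polynomial in `ℂ[x,y]`. -/
def IsLinForm (α : MvPolynomial (Fin 2) ℂ) : Prop := α ≠ 0 ∧ α.IsHomogeneous 1

/-!
Write `α = linForm v`, `β = linForm w` with `wedge v w ≠ 0`. The action on linear forms is
`A·linForm v = -linForm (A v)`, and by the Leibniz rule `A·(α²β²) = 2αβ(β·(A·α) + α·(A·β))`.
If `A·φ = tφ`, cancelling `αβ` and evaluating at a zero of `β` (resp. `α`) shows that `w`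
(resp. `v`) is an eigenvector of `A`. Conversely, if `A v = a v` and `A w = b w`, then
`A·φ = -2(a + b)φ = -2 tr(A) φ`, which vanishes on `sl₂`. Hence `conf(φ) = aut(φ)` consists of
the traceless matrices that are diagonal in the basis `v, w`: the line spanned by
`cartanGenerator v w`.
-/

open Matrix

section LinForm

variable {σ R : Type*} [Fintype σ] [CommSemiring R]

noncomputable def linForm : (σ → R) →ₗ[R] MvPolynomial σ R := Fintype.linearCombination R X

lemma exists_linForm_eq_of_isHomogeneous_one {φ : MvPolynomial σ R} (h : φ.IsHomogeneous 1) :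
    ∃ v, linForm v = φ := by
  have hφ : φ ∈ homogeneousSubmodule σ R 1 := h
  rw [homogeneousSubmodule_one_eq_span_X, Submodule.mem_span_range_iff_exists_fun] at hφ
  simpa [linForm, Fintype.linearCombination_apply] using hφ

lemma eval_linForm (v x : σ → R) : eval x (linForm v) = v ⬝ᵥ x := by
  simp [linForm, Fintype.linearCombination_apply, dotProduct]

end LinForm

section Wedge

variable {K : Type*} [Field K]

def wedge (v w : Fin 2 → K) : K := v 0 * w 1 - v 1 * w 0

lemma wedge_swap (v w : Fin 2 → K) : wedge w v = -wedge v w := by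
  simp only [wedge]; ring

@[simp]
lemma wedge_self (v : Fin 2 → K) : wedge v v = 0 := by
  simp only [wedge]; ring

lemma wedge_ne_zero_left {v w : Fin 2 → K} (hvw : wedge v w ≠ 0) : v ≠ 0 := by
  rintro rfl; simp [wedge] at hvw

lemma wedge_ne_zero_right {v w : Fin 2 → K} (hvw : wedge v w ≠ 0) : w ≠ 0 := by
  rintro rfl; simp [wedge] at hvw

lemma exists_eq_smul_of_wedge_eq_zero {v x : Fin 2 → K} (hv : v ≠ 0) (h : wedge v x = 0) :
    ∃ c : K, x = c • v := by
  simp only [wedge] at h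
  by_cases h0 : v 0 = 0
  · have h1 : v 1 ≠ 0 := fun h1 => hv (by ext i; fin_cases i <;> simp [h0, h1])
    have hx0 : x 0 = 0 := by simpa [h0, h1] using h
    refine ⟨x 1 / v 1, funext fun i => ?_⟩
    fin_cases i <;> simp [h0, hx0, h1]
  · refine ⟨x 0 / v 0, funext fun i => ?_⟩
    fin_cases i <;> simp only [Fin.zero_eta, Fin.mk_one, Pi.smul_apply, smul_eq_mul] <;> field_simp
    linear_combination h

lemma eq_of_mulVec_eq_of_wedge_ne_zero {A B : Matrix (Fin 2) (Fin 2) K} {v w : Fin 2 → K}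
    (hvw : wedge v w ≠ 0) (hv : A *ᵥ v = B *ᵥ v) (hw : A *ᵥ w = B *ᵥ w) : A = B := by
  ext i j
  have hvi := congrFun hv i
  have hwi := congrFun hw i
  simp only [wedge, mulVec, dotProduct, Fin.sum_univ_two] at hvw hvi hwi
  apply mul_left_cancel₀ hvw
  fin_cases j <;> simp only [Fin.zero_eta, Fin.mk_one]
  · linear_combination w 1 * hvi - v 1 * hwi
  · linear_combination v 0 * hwi - w 0 * hvi

lemma wedge_mulVec_add_wedge_mulVec (A : Matrix (Fin 2) (Fin 2) K) (v w : Fin 2 → K) :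
    wedge (A *ᵥ v) w + wedge v (A *ᵥ w) = A.trace * wedge v w := by
  simp only [wedge, mulVec, dotProduct, Fin.sum_univ_two, trace_fin_two]; ring

lemma trace_eq_add_of_mulVec_eq_smul {A : Matrix (Fin 2) (Fin 2) K} {v w : Fin 2 → K} {a b : K}
    (hvw : wedge v w ≠ 0) (hv : A *ᵥ v = a • v) (hw : A *ᵥ w = b • w) : A.trace = a + b := by
  apply mul_right_cancel₀ hvw
  rw [← wedge_mulVec_add_wedge_mulVec, hv, hw]
  simp only [wedge, Pi.smul_apply, smul_eq_mul]; ring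

/-- `cartanGenerator v w *ᵥ x = wedge v x • w + wedge w x • v`. -/
def cartanGenerator (v w : Fin 2 → K) : Matrix (Fin 2) (Fin 2) K :=
  !![-(v 0 * w 1 + v 1 * w 0), 2 * v 0 * w 0; -2 * v 1 * w 1, v 0 * w 1 + v 1 * w 0]

lemma trace_cartanGenerator (v w : Fin 2 → K) : (cartanGenerator v w).trace = 0 := by
  simp [cartanGenerator, trace_fin_two]

lemma cartanGenerator_mulVec_left (v w : Fin 2 → K) :
    cartanGenerator v w *ᵥ v = -wedge v w • v := by
  ext i; fin_cases i <;>
    simp only [cartanGenerator, wedge, mulVec, dotProduct, Fin.sum_univ_two, Fin.zero_eta, Fin.mk_one,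
      of_apply, cons_val', cons_val_fin_one, cons_val_zero, cons_val_one, Pi.smul_apply,
      smul_eq_mul] <;>
    ring

lemma cartanGenerator_mulVec_right (v w : Fin 2 → K) :
    cartanGenerator v w *ᵥ w = wedge v w • w := by
  ext i; fin_cases i <;>
    simp only [cartanGenerator, wedge, mulVec, dotProduct, Fin.sum_univ_two, Fin.zero_eta, Fin.mk_one,
      of_apply, cons_val', cons_val_fin_one, cons_val_zero, cons_val_one, Pi.smul_apply,
      smul_eq_mul] <;>
    ring

lemma cartanGenerator_ne_zero {v w : Fin 2 → K} (hvw : wedge v w ≠ 0) :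
    cartanGenerator v w ≠ 0 := by
  intro h
  have hw := cartanGenerator_mulVec_right v w
  rw [h, zero_mulVec, eq_comm, smul_eq_zero_iff_right hvw] at hw
  exact wedge_ne_zero_right hvw hw

lemma mem_span_cartanGenerator_iff {v w : Fin 2 → K} (hvw : wedge v w ≠ 0)
    {A : Matrix (Fin 2) (Fin 2) K} :
    A ∈ K ∙ cartanGenerator v w ↔
      A.trace = 0 ∧ wedge v (A *ᵥ v) = 0 ∧ wedge w (A *ᵥ w) = 0 := by
  rw [Submodule.mem_span_singleton]
  constructor
  · rintro ⟨u, rfl⟩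
    simp only [trace_smul, trace_cartanGenerator, smul_zero, smul_mulVec,
      cartanGenerator_mulVec_left, cartanGenerator_mulVec_right]
    simp only [wedge, Pi.smul_apply, smul_eq_mul, true_and]; constructor <;> ring
  · rintro ⟨htr, hv, hw⟩
    obtain ⟨a, ha⟩ := exists_eq_smul_of_wedge_eq_zero (wedge_ne_zero_left hvw) hv
    obtain ⟨b, hb⟩ := exists_eq_smul_of_wedge_eq_zero (wedge_ne_zero_right hvw) hw
    have hb' : b = -a := by
      linear_combination (trace_eq_add_of_mulVec_eq_smul hvw ha hb).symm.trans htr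
    refine ⟨-a / wedge v w, eq_of_mulVec_eq_of_wedge_ne_zero hvw ?_ ?_⟩
    · rw [smul_mulVec, cartanGenerator_mulVec_left, smul_smul, ha]
      field_simp
    · rw [smul_mulVec, cartanGenerator_mulVec_right, smul_smul, hb, hb']
      field_simp

lemma eval_linForm_perp (v w : Fin 2 → K) : eval ![w 1, -w 0] (linForm v) = wedge v w := by
  simp only [eval_linForm, dotProduct, Fin.sum_univ_two, cons_val_zero, cons_val_one, wedge]
  ring

lemma linForm_ne_zero_of_wedge_ne_zero {v w : Fin 2 → K} (hvw : wedge v w ≠ 0) :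
    linForm v ≠ 0 := by
  intro h
  apply hvw
  rw [← eval_linForm_perp, h, map_zero]

end Wedge

lemma sAct_linForm (A : Matrix (Fin 2) (Fin 2) ℂ) (v : Fin 2 → ℂ) :
    sAct A (linForm v) = -linForm (A *ᵥ v) := by
  simp only [sAct, linForm, Fintype.linearCombination_apply, smul_eq_C_mul, Fin.sum_univ_two,
    map_add, Derivation.leibniz, pderiv_X, Pi.single_eq_same, Pi.single_eq_of_ne, smul_eq_mul,
    derivation_C, mulVec_fin_two, cons_val_zero, cons_val_one, C_mul, ne_eq, one_ne_zero,
    zero_ne_one, not_false_eq_true, mul_one, mul_zero, add_zero, zero_add]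
  ring

lemma sAct_sq_mul_sq (A : Matrix (Fin 2) (Fin 2) ℂ) (f g : MvPolynomial (Fin 2) ℂ) :
    sAct A (f ^ 2 * g ^ 2) = 2 * f * g * (g * sAct A f + f * sAct A g) := by
  simp only [sAct, Derivation.leibniz, Derivation.leibniz_pow, smul_eq_mul, nsmul_eq_mul]
  ring

section TypeD

variable {A : Matrix (Fin 2) (Fin 2) ℂ} {v w : Fin 2 → ℂ}

lemma sAct_sq_mul_sq_of_mulVec_eq_smul {a b : ℂ} (hv : A *ᵥ v = a • v) (hw : A *ᵥ w = b • w) :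
    sAct A (linForm v ^ 2 * linForm w ^ 2) =
      (-2 * (a + b)) • (linForm v ^ 2 * linForm w ^ 2) := by
  rw [sAct_sq_mul_sq, sAct_linForm, sAct_linForm, hv, hw, map_smul, map_smul]
  simp only [smul_eq_C_mul, map_mul, map_neg, map_add, map_ofNat]
  ring

lemma sAct_sq_mul_sq_of_wedge_eq_zero (hvw : wedge v w ≠ 0) (hv : wedge v (A *ᵥ v) = 0)
    (hw : wedge w (A *ᵥ w) = 0) :
    sAct A (linForm v ^ 2 * linForm w ^ 2) =
      (-2 * A.trace) • (linForm v ^ 2 * linForm w ^ 2) := by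
  obtain ⟨a, ha⟩ := exists_eq_smul_of_wedge_eq_zero (wedge_ne_zero_left hvw) hv
  obtain ⟨b, hb⟩ := exists_eq_smul_of_wedge_eq_zero (wedge_ne_zero_right hvw) hw
  rw [trace_eq_add_of_mulVec_eq_smul hvw ha hb, sAct_sq_mul_sq_of_mulVec_eq_smul ha hb]

lemma wedge_mulVec_eq_zero_of_sAct_sq_mul_sq_eq_smul (hvw : wedge v w ≠ 0) {t : ℂ}
    (h : sAct A (linForm v ^ 2 * linForm w ^ 2) = t • (linForm v ^ 2 * linForm w ^ 2)) :
    wedge v (A *ᵥ v) = 0 ∧ wedge w (A *ᵥ w) = 0 := by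
  have hwv : wedge w v ≠ 0 := by rwa [wedge_swap, neg_ne_zero]
  have hαβ : linForm v * linForm w ≠ 0 :=
    mul_ne_zero (linForm_ne_zero_of_wedge_ne_zero hvw) (linForm_ne_zero_of_wedge_ne_zero hwv)
  have key : 2 * (linForm w * sAct A (linForm v) + linForm v * sAct A (linForm w)) =
      C t * (linForm v * linForm w) := by
    apply mul_left_cancel₀ hαβ
    rw [sAct_sq_mul_sq, smul_eq_C_mul] at h
    linear_combination h
  have at_perp_w := congrArg (eval ![w 1, -w 0]) key
  have at_perp_v := congrArg (eval ![v 1, -v 0]) key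
  simp only [sAct_linForm, map_mul, map_add, map_neg, map_ofNat, eval_C, eval_linForm_perp]
    at at_perp_w at_perp_v
  simp only [wedge_self, mul_zero, zero_mul, neg_zero, zero_add, add_zero, mul_neg, neg_eq_zero,
    mul_eq_zero, OfNat.ofNat_ne_zero, hvw, hwv, false_or] at at_perp_w at_perp_v
  exact ⟨by rw [wedge_swap, at_perp_v, neg_zero], by rw [wedge_swap, at_perp_w, neg_zero]⟩

lemma sAct_sq_mul_sq_eq_zero_iff (hvw : wedge v w ≠ 0) (htr : A.trace = 0) :
    sAct A (linForm v ^ 2 * linForm w ^ 2) = 0 ↔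
      wedge v (A *ᵥ v) = 0 ∧ wedge w (A *ᵥ w) = 0 :=
  ⟨fun h => wedge_mulVec_eq_zero_of_sAct_sq_mul_sq_eq_smul hvw (t := 0) (by rw [h, zero_smul]),
    fun ⟨hv, hw⟩ => by rw [sAct_sq_mul_sq_of_wedge_eq_zero hvw hv hw, htr, mul_zero, zero_smul]⟩

end TypeD

/-- Petrov type (22)=(D): for `φ = α²β²` with `α,β` non-proportional linear forms,
`conf(φ) = aut(φ)` and this space is a 1-dimensional complex subspace of `sl₂(ℂ)`. -/
theorem aut_conf_type_D (α β : MvPolynomial (Fin 2) ℂ)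
    (hα : IsLinForm α) (hβ : IsLinForm β) (hαβ : ∀ c : ℂ, α ≠ c • β) :
    {A : Matrix (Fin 2) (Fin 2) ℂ |
        A.trace = 0 ∧ ∃ c : ℂ, sAct A (α ^ 2 * β ^ 2) = c • (α ^ 2 * β ^ 2)} =
      {A : Matrix (Fin 2) (Fin 2) ℂ | A.trace = 0 ∧ sAct A (α ^ 2 * β ^ 2) = 0} ∧
    ∃ S : Submodule ℂ (Matrix (Fin 2) (Fin 2) ℂ),
      (S : Set (Matrix (Fin 2) (Fin 2) ℂ)) =
        {A | A.trace = 0 ∧ sAct A (α ^ 2 * β ^ 2) = 0} ∧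
      Module.finrank ℂ S = 1 := by
  obtain ⟨v, rfl⟩ := exists_linForm_eq_of_isHomogeneous_one hα.2
  obtain ⟨w, rfl⟩ := exists_linForm_eq_of_isHomogeneous_one hβ.2
  have hvw : wedge v w ≠ 0 := by
    intro h
    have hw : w ≠ 0 := by rintro rfl; exact hβ.1 (map_zero linForm)
    obtain ⟨c, rfl⟩ := exists_eq_smul_of_wedge_eq_zero hw (by rw [wedge_swap, h, neg_zero])
    exact hαβ c (map_smul linForm c w)
  refine ⟨?_, ℂ ∙ cartanGenerator v w, ?_, finrank_span_singleton (cartanGenerator_ne_zero hvw)⟩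
  · ext A
    refine ⟨fun ⟨htr, _, h⟩ => ⟨htr, ?_⟩, fun ⟨htr, h⟩ => ⟨htr, 0, by rw [h, zero_smul]⟩⟩
    exact (sAct_sq_mul_sq_eq_zero_iff hvw htr).2
      (wedge_mulVec_eq_zero_of_sAct_sq_mul_sq_eq_smul hvw h)
  · ext A
    rw [SetLike.mem_coe, mem_span_cartanGenerator_iff hvw]
    exact and_congr_right fun htr => (sAct_sq_mul_sq_eq_zero_iff hvw htr).symm
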